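/- arXiv:2312.13773 — 4 statements merged into one kernel-verified Lean document; each statement's English description precedes it below -/
import Mathlib

section
/- Suppose the optimal objective value f* of the primal LP is finite, and let ε, δ ≥ 0. If R_ε is positive and finite, then R_ε · r_δ ≤ ε + δ. -/
/-!
Weak duality with an explicit gap. For `x ∈ F_p` and `s ∈ F_d`, the vectors `x - q` and `s - c`
lie in `V̄_p` and `V̄_p^⊥`, and the minimum-norm point `q` is orthogonal to `V̄_p ∋ c`; hence
`sᵀx = cᵀx + qᵀs ≤ (f* + δ) - (f* - ε)`. On the other hand `s ≥ 0` gives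
`sᵀx ≥ ‖s‖₁ · minᵢ xᵢ`, and the maximizers defining `R_ε` and `r_δ` give the bound.
-/

open scoped RealInnerProductSpace

namespace AffineSubspace

variable {E : Type*} [NormedAddCommGroup E] [InnerProductSpace ℝ E] {P : AffineSubspace ℝ E}

theorem inner_eq_zero_of_forall_norm_le {q v : E} (hq : q ∈ P) (hmin : ∀ p ∈ P, ‖q‖ ≤ ‖p‖)
    (hv : v ∈ P.direction) : ⟪q, v⟫ = 0 := by
  have hbdd : BddBelow (Set.range fun w : (P.direction : Set E) => ‖q - w‖) :=
    ⟨0, by rintro _ ⟨w, rfl⟩; exact norm_nonneg _⟩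
  have hq_min : ‖q - 0‖ = ⨅ w : (P.direction : Set E), ‖q - w‖ := by
    rw [sub_zero]
    refine le_antisymm (le_ciInf fun w => hmin _ ?_) ?_
    · simpa [vadd_eq_add, neg_add_eq_sub] using vadd_mem_of_mem_direction (neg_mem w.2) hq
    · simpa using ciInf_le hbdd ⟨0, P.direction.zero_mem⟩
  simpa using (Submodule.norm_eq_iInf_iff_real_inner_eq_zero _ P.direction.zero_mem).1 hq_min v hv

theorem inner_eq_inner_add_inner {x q s c : E} (hx : x ∈ P) (hq : q ∈ P)
    (hs : s - c ∈ P.directionᗮ) (hqc : ⟪q, c⟫ = 0) : ⟪s, x⟫ = ⟪c, x⟫ + ⟪q, s⟫ := by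
  have horth : ⟪x - q, s - c⟫ = 0 :=
    Submodule.inner_right_of_mem_orthogonal (vsub_mem_direction hx hq) hs
  rw [inner_sub_left, inner_sub_right, inner_sub_right, hqc] at horth
  rw [real_inner_comm x s, real_inner_comm x c]
  linarith

end AffineSubspace

theorem EuclideanSpace.sum_abs_mul_iInf_le_inner {ι : Type*} [Fintype ι]
    {s : EuclideanSpace ℝ ι} (hs : ∀ i, 0 ≤ s i) (x : EuclideanSpace ℝ ι) :
    (∑ i, |s i|) * ⨅ i, x i ≤ ⟪s, x⟫ := by
  rw [PiLp.inner_apply, Finset.sum_mul]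
  refine Finset.sum_le_sum fun i _ => ?_
  rw [abs_of_nonneg (hs i), RCLike.inner_apply, conj_trivial, mul_comm (x i)]
  exact mul_le_mul_of_nonneg_left (ciInf_le (Set.finite_range _).bddBelow i) (hs i)

theorem Reps_mul_rdelta_le_general
    (n : ℕ)
    (Vp : AffineSubspace ℝ (EuclideanSpace ℝ (Fin n)))
    (c : EuclideanSpace ℝ (Fin n)) (hcdir : c ∈ Vp.direction)
    (Fp : Set (EuclideanSpace ℝ (Fin n)))
    (hFp : Fp = {x | x ∈ Vp ∧ ∀ i, 0 ≤ x i})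
    (fstar : ℝ)
    (Vd : Set (EuclideanSpace ℝ (Fin n)))
    (hVd : Vd = {s | s - c ∈ Vp.directionᗮ})
    (Fd : Set (EuclideanSpace ℝ (Fin n)))
    (hFd : Fd = {s | s ∈ Vd ∧ ∀ i, 0 ≤ s i})
    (q : EuclideanSpace ℝ (Fin n)) (hqVp : q ∈ Vp)
    (hqmin : ∀ v ∈ (Vp : Set (EuclideanSpace ℝ (Fin n))), ‖q‖ ≤ ‖v‖)
    (ε δ : ℝ)
    (rδ : ℝ)
    (hrδ : IsGreatest {t | ∃ x ∈ Fp, ⟪c, x⟫ ≤ fstar + δ ∧ t = ⨅ i, x i} rδ)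
    (Rε : ℝ)
    (hRε : IsGreatest {t | ∃ s ∈ Fd, fstar - ε ≤ -⟪q, s⟫ ∧ t = ∑ i, |s i|} Rε) :
    Rε * rδ ≤ ε + δ := by
  subst hFp hFd hVd
  obtain ⟨⟨s, ⟨hs_dual, hs_nonneg⟩, hs_obj, rfl⟩, -⟩ := hRε
  obtain ⟨⟨x, ⟨hx_primal, -⟩, hx_obj, rfl⟩, -⟩ := hrδ
  have hqc : ⟪q, c⟫ = 0 := AffineSubspace.inner_eq_zero_of_forall_norm_le hqVp hqmin hcdir
  have hgap : ⟪s, x⟫ = ⟪c, x⟫ + ⟪q, s⟫ :=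
    AffineSubspace.inner_eq_inner_add_inner hx_primal hqVp hs_dual hqc
  have hlow := EuclideanSpace.sum_abs_mul_iInf_le_inner hs_nonneg x
  linarith

/-- Theorem 2.1 of Freund, upper bound: if the optimal value `f*` of the
primal LP is finite and `R_ε` is positive (and finite), then `R_ε · r_δ ≤ ε + δ`. -/
theorem Reps_mul_rdelta_le
    (n : ℕ) (hn : 0 < n)
    (Vp : AffineSubspace ℝ (EuclideanSpace ℝ (Fin n)))
    (c : EuclideanSpace ℝ (Fin n)) (hcdir : c ∈ Vp.direction)
    (Fp : Set (EuclideanSpace ℝ (Fin n)))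
    (hFp : Fp = {x | x ∈ Vp ∧ ∀ i, 0 ≤ x i})
    (fstar : ℝ)
    (hfstar : IsGLB ((fun x => ⟪c, x⟫) '' Fp) fstar)
    (Vd : Set (EuclideanSpace ℝ (Fin n)))
    (hVd : Vd = {s | s - c ∈ Vp.directionᗮ})
    (Fd : Set (EuclideanSpace ℝ (Fin n)))
    (hFd : Fd = {s | s ∈ Vd ∧ ∀ i, 0 ≤ s i})
    (q : EuclideanSpace ℝ (Fin n)) (hqVp : q ∈ Vp)
    (hqmin : ∀ v ∈ (Vp : Set (EuclideanSpace ℝ (Fin n))), ‖q‖ ≤ ‖v‖)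
    (ε δ : ℝ) (hε : 0 ≤ ε) (hδ : 0 ≤ δ)
    (rδ : ℝ)
    (hrδ : IsGreatest {t | ∃ x ∈ Fp, ⟪c, x⟫ ≤ fstar + δ ∧ t = ⨅ i, x i} rδ)
    (Rε : ℝ)
    (hRε : IsGreatest {t | ∃ s ∈ Fd, fstar - ε ≤ -⟪q, s⟫ ∧ t = ∑ i, |s i|} Rε)
    (hRpos : 0 < Rε) :
    Rε * rδ ≤ ε + δ :=
  Reps_mul_rdelta_le_general n Vp c hcdir Fp hFp fstar Vd hVd Fd hFd q hqVp hqmin ε δ rδ hrδ Rε hRε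
end

section
/- Under the stated assumptions, the primal LP sharpness satisfies μ_p = inf_{x ∈ F_p \ X*} (c^T x − f*)/(‖c‖ · Dist(x, X*)) = (1/Dist(0, V_d)) · inf_{x ∈ F_p \ X*} (c^T x − f*)/Dist(x, X*). -/
open Metric Set
open scoped RealInnerProductSpace

open scoped Pointwise in
lemma Real.sInf_image_const_mul {X : Type*} {a : ℝ} (ha : 0 ≤ a) (g : X → ℝ) (S : Set X) :
    sInf ((fun x => a * g x) '' S) = a * sInf (g '' S) := by
  rw [← smul_eq_mul a, ← Real.sInf_smul_of_nonneg ha, ← Set.image_smul, Set.image_image]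
  rfl

lemma Metric.infDist_eq_dist_of_forall_dist_le {α : Type*} [PseudoMetricSpace α] {s : Set α}
    {x y : α} (hy : y ∈ s) (h : ∀ z ∈ s, dist x y ≤ dist x z) : infDist x s = dist x y :=
  le_antisymm (infDist_le_dist_of_mem hy) ((le_infDist ⟨y, hy⟩).2 h)

section InnerProductSpace

variable {E : Type*} [NormedAddCommGroup E] [InnerProductSpace ℝ E]

/-- Inside `V`, the nearest point of the hyperplane `⟪c, ·⟫ = f` is reached along `c`, which
stays in `V` because `c ∈ V.direction`. -/
theorem AffineSubspace.infDist_inter_hyperplane {V : AffineSubspace ℝ E} {c x : E}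
    (hcV : c ∈ V.direction) (hc : c ≠ 0) (hx : x ∈ V) (f : ℝ) :
    infDist x ((V : Set E) ∩ {y | ⟪c, y⟫ = f}) = |⟪c, x⟫ - f| / ‖c‖ := by
  have hc' : 0 < ‖c‖ := norm_pos_iff.mpr hc
  set t := (⟪c, x⟫ - f) / ‖c‖ ^ 2
  have hyV : x - t • c ∈ V := by
    simpa [sub_eq_neg_add] using AffineSubspace.vadd_mem_of_mem_direction
      (V.direction.smul_mem (-t) hcV) hx
  have hyH : ⟪c, x - t • c⟫ = f := by
    rw [inner_sub_right, real_inner_smul_right, real_inner_self_eq_norm_sq,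
      div_mul_cancel₀ _ (by positivity), sub_sub_cancel]
  have hdist : dist x (x - t • c) = |⟪c, x⟫ - f| / ‖c‖ := by
    rw [dist_eq_norm, sub_sub_cancel, norm_smul, Real.norm_eq_abs, abs_div, abs_sq]
    field_simp
  rw [← hdist]
  refine infDist_eq_dist_of_forall_dist_le ⟨hyV, hyH⟩ fun z ⟨_, hzH⟩ => ?_
  have hcz : |⟪c, x⟫ - f| = |⟪c, x - z⟫| := by
    rw [inner_sub_right, show ⟪c, z⟫ = f from hzH]
  rw [hdist, div_le_iff₀ hc', hcz, dist_eq_norm, mul_comm]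
  exact abs_real_inner_le_norm c (x - z)

/-- Every `s` with `s - c ⊥ K` satisfies `‖s‖² = ‖c‖² + ‖s - c‖²` (Pythagoras), since `c ∈ K`. -/
theorem Submodule.infDist_zero_translate_orthogonal {K : Submodule ℝ E} {c : E} (hc : c ∈ K) :
    infDist 0 {s | s - c ∈ Kᗮ} = ‖c‖ := by
  rw [← dist_zero_left c]
  refine infDist_eq_dist_of_forall_dist_le (by simp) fun s hs => ?_
  have hpyth := norm_add_sq_eq_norm_sq_add_norm_sq_real
    ((Submodule.mem_orthogonal K (s - c)).mp hs c hc)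
  rw [add_sub_cancel] at hpyth
  simp only [dist_zero_left]
  nlinarith [norm_nonneg c, norm_nonneg s, mul_self_nonneg ‖s - c‖]

end InnerProductSpace

theorem primal_sharpness_alternative_expressions_general
    (n : ℕ)
    (Vp : AffineSubspace ℝ (EuclideanSpace ℝ (Fin n)))
    (c : EuclideanSpace ℝ (Fin n)) (hcdir : c ∈ Vp.direction) (hc0 : c ≠ 0)
    (Fp : Set (EuclideanSpace ℝ (Fin n)))
    (hFp : Fp = {x | x ∈ Vp ∧ ∀ i, 0 ≤ x i})
    (fstar : ℝ)
    (hfstar : IsLeast ((fun x => ⟪c, x⟫) '' Fp) fstar)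
    (Xstar : Set (EuclideanSpace ℝ (Fin n)))
    (Hstar : Set (EuclideanSpace ℝ (Fin n)))
    (hHstar : Hstar = {x | ⟪c, x⟫ = fstar})
    (Vd : Set (EuclideanSpace ℝ (Fin n)))
    (hVd : Vd = {s | s - c ∈ Vp.directionᗮ})
    (μp : ℝ)
    (hμp : μp = sInf ((fun x => infDist x ((Vp : Set (EuclideanSpace ℝ (Fin n))) ∩ Hstar)
        / infDist x Xstar) '' (Fp \ Xstar))) :
    μp = sInf ((fun x => (⟪c, x⟫ - fstar) / (‖c‖ * infDist x Xstar)) '' (Fp \ Xstar)) ∧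
    μp = (1 / infDist 0 Vd) *
      sInf ((fun x => (⟪c, x⟫ - fstar) / infDist x Xstar) '' (Fp \ Xstar)) := by
  have hsharp : (fun x => infDist x ((Vp : Set (EuclideanSpace ℝ (Fin n))) ∩ Hstar)
      / infDist x Xstar) '' (Fp \ Xstar)
      = (fun x => (⟪c, x⟫ - fstar) / (‖c‖ * infDist x Xstar)) '' (Fp \ Xstar) := by
    refine Set.image_congr fun x ⟨hxF, _⟩ => ?_
    have hgap : 0 ≤ ⟪c, x⟫ - fstar := sub_nonneg.mpr (hfstar.2 ⟨x, hxF, rfl⟩)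
    rw [hHstar, AffineSubspace.infDist_inter_hyperplane hcdir hc0 (hFp ▸ hxF).1,
      abs_of_nonneg hgap, div_div]
  refine ⟨hμp.trans (congrArg sInf hsharp), ?_⟩
  rw [hVd, Submodule.infDist_zero_translate_orthogonal hcdir, hμp, hsharp,
    ← Real.sInf_image_const_mul (by positivity)]
  congr 1
  refine Set.image_congr fun x _ => ?_
  rw [div_mul_div_comm, one_mul]

/-- Remark, primal case: the primal LP sharpness satisfies
`μ_p = inf_{x ∈ F_p \ X*} (c^T x − f*)/(‖c‖·Dist(x,X*))
     = (1/Dist(0,V_d)) · inf_{x ∈ F_p \ X*} (c^T x − f*)/Dist(x,X*)`. -/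
theorem primal_sharpness_alternative_expressions
    (n : ℕ)
    (Vp : AffineSubspace ℝ (EuclideanSpace ℝ (Fin n)))
    (c : EuclideanSpace ℝ (Fin n)) (hcdir : c ∈ Vp.direction) (hc0 : c ≠ 0)
    (Fp : Set (EuclideanSpace ℝ (Fin n)))
    (hFp : Fp = {x | x ∈ Vp ∧ ∀ i, 0 ≤ x i})
    (fstar : ℝ)
    (hfstar : IsLeast ((fun x => ⟪c, x⟫) '' Fp) fstar)
    (Xstar : Set (EuclideanSpace ℝ (Fin n)))
    (hXstar : Xstar = {x ∈ Fp | ⟪c, x⟫ = fstar})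
    (Hstar : Set (EuclideanSpace ℝ (Fin n)))
    (hHstar : Hstar = {x | ⟪c, x⟫ = fstar})
    (Vd : Set (EuclideanSpace ℝ (Fin n)))
    (hVd : Vd = {s | s - c ∈ Vp.directionᗮ})
    (hPnonopt : (Fp \ Xstar).Nonempty)
    (μp : ℝ)
    (hμp : μp = sInf ((fun x => infDist x ((Vp : Set (EuclideanSpace ℝ (Fin n))) ∩ Hstar)
        / infDist x Xstar) '' (Fp \ Xstar))) :
    μp = sInf ((fun x => (⟪c, x⟫ - fstar) / (‖c‖ * infDist x Xstar)) '' (Fp \ Xstar)) ∧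
    μp = (1 / infDist 0 Vd) *
      sInf ((fun x => (⟪c, x⟫ - fstar) / infDist x Xstar) '' (Fp \ Xstar)) :=
  primal_sharpness_alternative_expressions_general n Vp c hcdir hc0 Fp hFp fstar hfstar Xstar Hstar
    hHstar Vd hVd μp hμp
end

section
/- Suppose μ_d > 0 and the set S* of dual optimal solutions is nonempty and bounded. Then for every δ ≥ 0, R_δ ≤ √n · ( δ/(‖q‖ · μ_d) + Dist(0, S*) + Diam(S*) ), where R_δ := sup{ ‖s‖_1 : s ∈ F_d, −q^T s ≥ f* − δ }. -/
open Metric Set Filter Topology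
open scoped RealInnerProductSpace Classical

/-! Sharpness, read at a point `s` of the level set, bounds `Dist(s, S*)` by `δ / (‖q‖ μ_d)`.
Going from `s` to `0` through a nearest point of `S*` costs at most `Dist(s, S*) + Diam(S*)` plus
`Dist(0, S*)`, and Cauchy–Schwarz turns the resulting bound on `‖s‖` into one on `‖s‖₁`. -/

theorem EuclideanSpace.sum_abs_le_sqrt_card_mul_norm {ι : Type*} [Fintype ι]
    (x : EuclideanSpace ℝ ι) : ∑ i, |x i| ≤ √(Fintype.card ι) * ‖x‖ := by
  rw [EuclideanSpace.norm_eq, ← Real.sqrt_mul (Nat.cast_nonneg _)]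
  apply Real.le_sqrt_of_sq_le
  simpa [sq_abs] using sq_sum_le_card_mul_sum_sq (s := Finset.univ) (f := fun i => |x i|)

theorem Metric.dist_le_infDist_add_infDist_add_diam {α : Type*} [PseudoMetricSpace α]
    {s : Set α} (hne : s.Nonempty) (hs : Bornology.IsBounded s) (x y : α) :
    dist x y ≤ infDist x s + infDist y s + diam s := by
  have hz : ∀ z ∈ s, dist x y - infDist x s - diam s ≤ dist y z := fun z hz => by
    have := dist_le_infDist_add_diam (x := x) hs hz
    have := dist_triangle_right x y z
    linarith
  have := (le_infDist hne).2 hz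
  linarith

/-- The junk value `φ x / 0 = 0` would force the infimum to be `≤ 0`, so `ψ > 0` on `A`. -/
theorem le_div_sInf_image_div {α : Type*} {A : Set α} {φ ψ : α → ℝ}
    (hψ : ∀ x ∈ A, 0 ≤ ψ x) (hpos : 0 < sInf ((fun x => φ x / ψ x) '' A)) {x : α} (hx : x ∈ A) :
    ψ x ≤ φ x / sInf ((fun x => φ x / ψ x) '' A) := by
  have hbdd : BddBelow ((fun x => φ x / ψ x) '' A) := by
    by_contra hnb
    rw [Real.sInf_of_not_bddBelow hnb] at hpos
    exact hpos.false
  have hle := csInf_le hbdd (mem_image_of_mem _ hx)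
  have hψx : 0 < ψ x := (hψ x hx).lt_of_ne fun h => by
    rw [← h, div_zero] at hle
    linarith
  rw [le_div_iff₀ hpos]
  rwa [le_div_iff₀ hψx, mul_comm] at hle

theorem dual_level_set_l1_bound_general
    (n : ℕ)
    (fstar : ℝ)
    (Fd : Set (EuclideanSpace ℝ (Fin n)))
    (q : EuclideanSpace ℝ (Fin n))
    (Sstar : Set (EuclideanSpace ℝ (Fin n)))
    (hSne : Sstar.Nonempty) (hSbdd : Bornology.IsBounded Sstar)
    (μd : ℝ)
    (hμd : μd = sInf ((fun s => (⟪q, s⟫ + fstar) / (‖q‖ * infDist s Sstar)) '' (Fd \ Sstar)))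
    (hμd_pos : 0 < μd)
    (δ : ℝ) (hδ : 0 ≤ δ) :
    ∀ s ∈ Fd, fstar - δ ≤ -⟪q, s⟫ →
      ∑ i, |s i| ≤ Real.sqrt n *
        (δ / (‖q‖ * μd) + infDist 0 Sstar + Metric.diam Sstar) := by
  intro s hs hlev
  have hdist : infDist s Sstar ≤ δ / (‖q‖ * μd) := by
    by_cases hsS : s ∈ Sstar
    · rw [infDist_zero_of_mem hsS]
      positivity
    · simp only [← div_div] at hμd
      calc infDist s Sstar ≤ (⟪q, s⟫ + fstar) / ‖q‖ / μd := by
            rw [hμd] at hμd_pos ⊢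
            exact le_div_sInf_image_div (fun _ _ => infDist_nonneg) hμd_pos ⟨hs, hsS⟩
        _ ≤ δ / (‖q‖ * μd) := by
            rw [div_div]
            gcongr
            linarith
  have hnorm := dist_le_infDist_add_infDist_add_diam hSne hSbdd s 0
  rw [dist_zero_right] at hnorm
  calc ∑ i, |s i| ≤ √n * ‖s‖ := by simpa using EuclideanSpace.sum_abs_le_sqrt_card_mul_norm s
    _ ≤ √n * (δ / (‖q‖ * μd) + infDist 0 Sstar + diam Sstar) := by gcongr; linarith

/-- if `μ_d > 0` and `S*` is nonempty and bounded, then for every `δ ≥ 0`,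
`R_δ = sup{‖s‖₁ : s ∈ F_d, −q^T s ≥ f* − δ} ≤ √n·(δ/(‖q‖·μ_d) + Dist(0,S*) + Diam(S*))`;
i.e. every `s ∈ F_d` with `−q^T s ≥ f* − δ` satisfies the bound on `‖s‖₁`. -/
theorem dual_level_set_l1_bound
    (n : ℕ)
    (Vp : AffineSubspace ℝ (EuclideanSpace ℝ (Fin n)))
    (c : EuclideanSpace ℝ (Fin n)) (hcdir : c ∈ Vp.direction) (hc0 : c ≠ 0)
    (fstar : ℝ)
    (Vd : Set (EuclideanSpace ℝ (Fin n)))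
    (hVd : Vd = {s | s - c ∈ Vp.directionᗮ})
    (Fd : Set (EuclideanSpace ℝ (Fin n)))
    (hFd : Fd = {s | s ∈ Vd ∧ ∀ i, 0 ≤ s i})
    (q : EuclideanSpace ℝ (Fin n)) (hqVp : q ∈ Vp)
    (hqmin : ∀ v ∈ (Vp : Set (EuclideanSpace ℝ (Fin n))), ‖q‖ ≤ ‖v‖) (hq0 : q ≠ 0)
    (Sstar : Set (EuclideanSpace ℝ (Fin n)))
    (hSstar : Sstar = {s ∈ Fd | ∀ t ∈ Fd, -⟪q, t⟫ ≤ -⟪q, s⟫})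
    (hSne : Sstar.Nonempty) (hSbdd : Bornology.IsBounded Sstar)
    (μd : ℝ)
    (hμd : μd = sInf ((fun s => (⟪q, s⟫ + fstar) / (‖q‖ * infDist s Sstar)) '' (Fd \ Sstar)))
    (hμd_pos : 0 < μd)
    (δ : ℝ) (hδ : 0 ≤ δ) :
    ∀ s ∈ Fd, fstar - δ ≤ -⟪q, s⟫ →
      ∑ i, |s i| ≤ Real.sqrt n *
        (δ / (‖q‖ * μd) + infDist 0 Sstar + Metric.diam Sstar) :=
  dual_level_set_l1_bound_general n fstar Fd q Sstar hSne hSbdd μd hμd hμd_pos δ hδ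
end

section
/- Suppose the primal LP has a unique optimal solution x*, μ_p > 0, μ_d > 0, S* is nonempty and bounded, and let δ > 0 and let x̄ ∈ F_p satisfy c^T x̄ ≤ f* + δ and min_i x̄_i = r_δ > 0. Then θ_p* ≤ ‖x* − x̄‖ · (√n/δ) · ( δ/(Dist(0, V_p) · μ_d) + Dist(0, S*) + Diam(S*) ). -/
open Metric Set Filter Topology
open scoped RealInnerProductSpace Classical

/-!
Write `r = min_i x̄_i` and `B = δ / (‖q‖ μ_d) + Dist(0, S*) + Diam(S*)`.

Being the unique optimum, `x*` has a zero coordinate, so `r ≤ ‖x̄ - x*‖`. An infeasible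
`x ∈ V_p` at distance `m` from `ℝⁿ₊` becomes feasible when moved towards `x̄` by the fraction
`m / (m + r)`; hence `θ(x) ≤ ‖x̄ - x‖ / r`, and `θ_p* ≤ ‖x̄ - x*‖ / r`.

It remains to show `δ ≤ r √n B`. By maximality of `r`, the open box `{y | ∀ i, r < y_i}` misses
`{x ∈ V_p | cᵀx ≤ f* + δ}`. A separating hyperplane yields `s ≥ 0` and `μ ≥ 0` with
`s - μ c ⊥ V̄_p` and `μ δ + (qᵀs + μ f*) ≤ r Σ sᵢ`: a point of the homogenized dual feasible cone.
On `F_d`, dual sharpness and `‖s‖ ≤ Dist(s, S*) + Dist(0, S*) + Diam(S*)` give the affine bound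
`‖q‖ μ_d Σ sᵢ ≤ √n (qᵀs + f* + ‖q‖ μ_d (Dist(0, S*) + Diam(S*)))`, which passes to the
homogenized cone (by scaling when `μ > 0`, along recession rays of `F_d` when `μ = 0`).
Comparing the two inequalities gives the claim.
-/

theorem le_of_forall_add_mul_le_add_mul {a b a' b' : ℝ}
    (h : ∀ t : ℝ, 0 ≤ t → a + t * b ≤ a' + t * b') : b ≤ b' := by
  by_contra! hlt
  have hpos := sub_pos.2 hlt
  have ht := div_mul_cancel₀ (|a - a'| + 1) hpos.ne'
  have := h ((|a - a'| + 1) / (b - b')) (div_nonneg (by positivity) hpos.le)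
  nlinarith [le_abs_self (a' - a), abs_sub_comm a a']

theorem le_mul_mul_of_le_div {θ a r R δ ν D : ℝ} (ha : 0 ≤ a) (hr : 0 < r) (hδ : 0 < δ)
    (hν : 0 < ν) (hθ : θ ≤ a / r) (h : δ * ν ≤ r * R * (δ + ν * D)) :
    θ ≤ a * (R / δ) * (δ / ν + D) := by
  have hone : 1 ≤ R / δ * (δ / ν + D) * r := by
    rw [show R / δ * (δ / ν + D) * r = r * R * (δ + ν * D) / (δ * ν) by field_simp,
      one_le_div (by positivity)]
    exact h
  refine hθ.trans ?_
  rw [div_le_iff₀ hr]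
  nlinarith [mul_le_mul_of_nonneg_left hone ha]

theorem le_mul_of_forall_lt_mul {a A r : ℝ} (h : ∀ t > r, a < t * A) : a ≤ r * A :=
  ge_of_tendsto
    ((continuous_mul_const A).continuousAt.tendsto.mono_left (nhdsWithin_le_nhds (s := Ioi r)))
    (eventually_nhdsWithin_of_forall fun t ht => (h t ht).le)

section EuclideanSpace

variable {n : ℕ}

theorem sum_apply_le_sqrt_mul_norm (s : EuclideanSpace ℝ (Fin n)) : ∑ i, s i ≤ √n * ‖s‖ := by
  simpa [EuclideanSpace.norm_eq] using
    Real.sum_mul_le_sqrt_mul_sqrt Finset.univ (fun _ => 1) (fun i => s i)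

theorem inner_toLp_const (s : EuclideanSpace ℝ (Fin n)) (t : ℝ) :
    ⟪s, WithLp.toLp 2 (fun _ => t)⟫ = t * ∑ i, s i := by
  simp [PiLp.inner_apply, Finset.mul_sum]

theorem inner_nonneg_of_forall_nonneg {x y : EuclideanSpace ℝ (Fin n)} (hx : ∀ i, 0 ≤ x i)
    (hy : ∀ i, 0 ≤ y i) : 0 ≤ ⟪x, y⟫ := by
  rw [PiLp.inner_apply]
  exact Finset.sum_nonneg fun i _ => mul_nonneg (hy i) (hx i)

theorem isOpen_setOf_forall_lt_apply (r : ℝ) :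
    IsOpen {y : EuclideanSpace ℝ (Fin n) | ∀ i, r < y i} := by
  simpa only [Set.ofPred_forall] using
    isOpen_iInter_of_finite fun i => isOpen_lt continuous_const (PiLp.continuous_apply 2 _ i)

theorem neg_apply_le_infDist_nonneg (x : EuclideanSpace ℝ (Fin n)) (i : Fin n) :
    -x i ≤ infDist x {y : EuclideanSpace ℝ (Fin n) | ∀ i, 0 ≤ y i} := by
  refine (le_infDist ⟨0, fun _ => by simp⟩).2 fun y hy => ?_
  have h := PiLp.norm_apply_le (x - y) i
  rw [Real.norm_eq_abs, PiLp.sub_apply] at h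
  rw [dist_eq_norm]
  linarith [neg_abs_le (x i - y i), hy i]

end EuclideanSpace

theorem norm_le_infDist_add_infDist_zero_add_diam {E : Type*} [SeminormedAddCommGroup E]
    {S : Set E} (hS : S.Nonempty) (hSb : Bornology.IsBounded S) (s : E) :
    ‖s‖ ≤ infDist s S + (infDist 0 S + diam S) := by
  have h₁ : ∀ s₀ ∈ S, ‖s‖ - dist s s₀ - diam S ≤ infDist 0 S := fun s₀ h₀ =>
    (le_infDist hS).2 fun s₁ h₁ => by
      have := dist_triangle4 s s₀ s₁ 0
      rw [dist_zero_right, dist_comm s₁] at this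
      linarith [dist_le_diam_of_mem hSb h₀ h₁]
  have h₂ : ‖s‖ - infDist 0 S - diam S ≤ infDist s S :=
    (le_infDist hS).2 fun s₀ h₀ => by linarith [h₁ s₀ h₀]
  linarith

theorem infDist_zero_eq_norm_of_forall_norm_le {E : Type*} [SeminormedAddCommGroup E]
    {V : Set E} {q : E} (hq : q ∈ V) (hmin : ∀ v ∈ V, ‖q‖ ≤ ‖v‖) : infDist 0 V = ‖q‖ :=
  le_antisymm (by simpa using infDist_le_dist_of_mem (x := 0) hq)
    ((le_infDist ⟨q, hq⟩).2 fun v hv => by simpa using hmin v hv)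

theorem mul_infDist_le_of_eq_sInf {α : Type*} [PseudoMetricSpace α] {F S : Set α} {g : α → ℝ}
    {κ μ : ℝ} (hg : ∀ s ∈ F, 0 ≤ g s) (hκ : 0 ≤ κ)
    (hμ : μ = sInf ((fun s => g s / (κ * infDist s S)) '' (F \ S))) {s : α} (hs : s ∈ F) :
    κ * μ * infDist s S ≤ g s := by
  have hbdd : BddBelow ((fun s => g s / (κ * infDist s S)) '' (F \ S)) :=
    ⟨0, by rintro _ ⟨t, ht, rfl⟩; exact div_nonneg (hg t ht.1) (mul_nonneg hκ infDist_nonneg)⟩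
  rw [mul_right_comm, mul_comm]
  rcases (mul_nonneg hκ (infDist_nonneg (x := s) (s := S))).eq_or_lt with h0 | hpos
  · rw [← h0, mul_zero]
    exact hg s hs
  have hsS : s ∉ S := fun h => by simp [infDist_zero_of_mem h] at hpos
  rw [← le_div_iff₀ hpos, hμ]
  exact csInf_le hbdd ⟨s, ⟨hs, hsS⟩, rfl⟩

section InnerProductSpace

variable {E : Type*} [NormedAddCommGroup E] [InnerProductSpace ℝ E]

theorem inner_eq_zero_of_forall_norm_le {V : AffineSubspace ℝ E} {q : E}
    (hq : q ∈ V) (hmin : ∀ v ∈ V, ‖q‖ ≤ ‖v‖) {d : E} (hd : d ∈ V.direction) : ⟪q, d⟫ = 0 := by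
  have hK : ‖q - 0‖ = ⨅ w : (V.direction : Set E), ‖q - w‖ := by
    refine le_antisymm (le_ciInf fun w => ?_) ?_
    · simpa [sub_eq_neg_add] using hmin _ (AffineSubspace.vadd_mem_of_mem_direction
        (V.direction.neg_mem w.2) hq)
    · exact (ciInf_le ⟨0, by rintro _ ⟨w, rfl⟩; positivity⟩ ⟨0, V.direction.zero_mem⟩).trans
        (by simp)
  simpa using (V.direction.norm_eq_iInf_iff_real_inner_eq_zero V.direction.zero_mem).1 hK d hd

theorem inner_eq_mul_inner_add_inner {V : AffineSubspace ℝ E} {c q s x : E} {μ : ℝ}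
    (hq : q ∈ V) (hqperp : ∀ d ∈ V.direction, ⟪q, d⟫ = 0) (hc : c ∈ V.direction)
    (hs : s - μ • c ∈ V.directionᗮ) (hx : x ∈ V) : ⟪s, x⟫ = μ * ⟪c, x⟫ + ⟪q, s⟫ := by
  have h := (Submodule.mem_orthogonal' _ _).1 hs _ (AffineSubspace.vsub_mem_direction hx hq)
  simp only [vsub_eq_sub, inner_sub_left, inner_sub_right, real_inner_smul_left] at h
  rw [real_inner_comm q c, hqperp c hc, real_inner_comm q s] at h
  linarith

theorem exists_nonneg_smul_sub_mem_orthogonal {K : Submodule ℝ E} {c s : E} (hc : c ∈ K)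
    (hc0 : c ≠ 0) {B : ℝ} (hB : ∀ d ∈ K, ⟪c, d⟫ ≤ 0 → ⟪s, d⟫ ≤ B) :
    ∃ μ : ℝ, 0 ≤ μ ∧ s - μ • c ∈ Kᗮ := by
  have hcone : ∀ d ∈ K, ⟪c, d⟫ ≤ 0 → ⟪s, d⟫ ≤ 0 := fun d hd hcd =>
    le_of_forall_add_mul_le_add_mul (a := 0) (a' := B) (b' := 0) fun t ht => by
      simpa [real_inner_smul_right] using hB (t • d) (K.smul_mem t hd)
        (by simpa [real_inner_smul_right] using mul_nonpos_of_nonneg_of_nonpos ht hcd)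
  have hc2 : 0 < ‖c‖ ^ 2 := by positivity
  refine ⟨⟪s, c⟫ / ‖c‖ ^ 2, div_nonneg ?_ hc2.le, (Submodule.mem_orthogonal _ _).2 fun d hd => ?_⟩
  · simpa [inner_neg_right] using hcone (-c) (K.neg_mem hc) (by simp)
  set d' := d - (⟪c, d⟫ / ‖c‖ ^ 2) • c
  have hd' : d' ∈ K := K.sub_mem hd (K.smul_mem _ hc)
  have hcd' : ⟪c, d'⟫ = 0 := by
    simp only [d', inner_sub_right, real_inner_smul_right, real_inner_self_eq_norm_sq]
    field_simp
    ring
  have h₁ := hcone d' hd' hcd'.le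
  have h₂ := hcone (-d') (K.neg_mem hd') (by simp [hcd'])
  rw [inner_neg_right] at h₂
  simp only [d', inner_sub_right, real_inner_smul_right] at h₁ h₂
  rw [inner_sub_right, real_inner_smul_right, real_inner_comm s d, real_inner_comm c d,
    div_mul_comm, mul_comm (⟪c, d⟫ / ‖c‖ ^ 2)]
  linarith

theorem exists_inner_separation [CompleteSpace E] {U L : Set E} (hUo : IsOpen U)
    (hUc : Convex ℝ U) (hLc : Convex ℝ L) (hUL : Disjoint U L) :
    ∃ (s : E) (v : ℝ), (∀ x ∈ L, ⟪s, x⟫ ≤ v) ∧ ∀ y ∈ U, v < ⟪s, y⟫ := by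
  obtain ⟨f, u, hfU, hfL⟩ := geometric_hahn_banach_open hUc hUo hLc hUL
  refine ⟨(InnerProductSpace.toDual ℝ E).symm (-f), -u, fun x hx => ?_, fun y hy => ?_⟩ <;>
    simp only [InnerProductSpace.toDual_symm_apply, neg_apply, neg_le_neg_iff, neg_lt_neg_iff]
  exacts [hfL x hx, hfU y hy]

end InnerProductSpace

section LinearProgram

variable {n : ℕ}

theorem exists_apply_eq_zero_of_forall_inner_le
    {V : AffineSubspace ℝ (EuclideanSpace ℝ (Fin n))} {c xstar : EuclideanSpace ℝ (Fin n)}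
    (hc : c ∈ V.direction) (hc0 : c ≠ 0) (hxs : xstar ∈ V) (hxs0 : ∀ i, 0 ≤ xstar i)
    (hmin : ∀ x ∈ V, (∀ i, 0 ≤ x i) → ⟪c, xstar⟫ ≤ ⟪c, x⟫) : ∃ i, xstar i = 0 := by
  by_contra! hne
  have hpos : ∀ i, 0 < xstar i := fun i => (hxs0 i).lt_of_ne (hne i).symm
  have hev : ∀ᶠ t in 𝓝[>] (0 : ℝ),
      xstar - t • c ∈ {y : EuclideanSpace ℝ (Fin n) | ∀ i, 0 < y i} :=
    (((continuous_const.sub (continuous_id.smul continuous_const)).tendsto' 0 xstar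
      (by simp)).mono_left nhdsWithin_le_nhds).eventually
      ((isOpen_setOf_forall_lt_apply 0).mem_nhds hpos)
  obtain ⟨t, ht, ht0⟩ := (hev.and self_mem_nhdsWithin).exists
  have hmem : xstar - t • c ∈ V := by
    simpa [vadd_eq_add, neg_add_eq_sub] using
      AffineSubspace.vadd_mem_of_mem_direction (V.direction.smul_mem (-t) hc) hxs
  have := hmin _ hmem fun i => (ht i).le
  rw [inner_sub_right, real_inner_smul_right, real_inner_self_eq_norm_sq] at this
  have : 0 < t * ‖c‖ ^ 2 := mul_pos ht0 (by positivity)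
  linarith

theorem infDist_div_infDist_nonneg_le {V : AffineSubspace ℝ (EuclideanSpace ℝ (Fin n))}
    {x xbar : EuclideanSpace ℝ (Fin n)} {r : ℝ} (hr : 0 < r) (hx : x ∈ V)
    (hx0 : ¬∀ i, 0 ≤ x i) (hxbar : xbar ∈ V) (hxbar_r : ∀ i, r ≤ xbar i) :
    infDist x {y | y ∈ V ∧ ∀ i, 0 ≤ y i} /
      infDist x {y : EuclideanSpace ℝ (Fin n) | ∀ i, 0 ≤ y i} ≤ ‖xbar - x‖ / r := by
  set m := infDist x {y : EuclideanSpace ℝ (Fin n) | ∀ i, 0 ≤ y i}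
  have hm : ∀ i, -x i ≤ m := neg_apply_le_infDist_nonneg x
  obtain ⟨i₀, hi₀⟩ : ∃ i, x i < 0 := by simpa using hx0
  have hm0 : 0 < m := by linarith [hm i₀]
  set t := m / (m + r)
  have ht : t * (m + r) = m := div_mul_cancel₀ m (by positivity)
  set y := AffineMap.lineMap x xbar t
  have hy : y ∈ {y | y ∈ V ∧ ∀ i, 0 ≤ y i} := by
    refine ⟨AffineMap.lineMap_mem t hx hxbar, fun i => ?_⟩
    simp only [y, AffineMap.lineMap_apply_module, PiLp.add_apply, PiLp.smul_apply, smul_eq_mul]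
    nlinarith [hm i, hxbar_r i]
  calc infDist x {y | y ∈ V ∧ ∀ i, 0 ≤ y i} / m ≤ t * dist x xbar / m := by
        gcongr
        refine (infDist_le_dist_of_mem hy).trans_eq ?_
        rw [dist_left_lineMap, Real.norm_eq_abs, abs_of_nonneg (by positivity)]
    _ = dist x xbar / (m + r) := by
        field_simp
        linear_combination dist x xbar * ht
    _ ≤ ‖xbar - x‖ / r := by
        rw [dist_comm, dist_eq_norm]
        exact div_le_div_of_nonneg_left (norm_nonneg _) hr (by linarith)

theorem limiting_error_ratio_le {V : AffineSubspace ℝ (EuclideanSpace ℝ (Fin n))}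
    {Fp : Set (EuclideanSpace ℝ (Fin n))} (hFp : Fp = {x | x ∈ V ∧ ∀ i, 0 ≤ x i})
    {xstar xbar : EuclideanSpace ℝ (Fin n)} {r θp : ℝ} {θ : EuclideanSpace ℝ (Fin n) → ℝ}
    (hr : 0 < r) (hxbar : xbar ∈ V) (hxbar_r : ∀ i, r ≤ xbar i) {j : Fin n} (hj : xstar j = 0)
    (hθ : ∀ x, θ x = if x ∈ Fp then 1
        else infDist x Fp / infDist x {y : EuclideanSpace ℝ (Fin n) | ∀ i, 0 ≤ y i})
    (hθp : Tendsto (fun ε : ℝ => sSup (θ '' {x | x ∈ V ∧ infDist x {xstar} ≤ ε}))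
        (𝓝[>] 0) (𝓝 θp)) :
    θp ≤ ‖xbar - xstar‖ / r := by
  have hr_le : r ≤ ‖xbar - xstar‖ := by
    have := PiLp.norm_apply_le (xbar - xstar) j
    rw [PiLp.sub_apply, hj, sub_zero, Real.norm_eq_abs] at this
    exact (hxbar_r j).trans ((le_abs_self _).trans this)
  have hpoint : ∀ x ∈ V, θ x ≤ (‖xbar - xstar‖ + dist x xstar) / r := by
    intro x hx
    rw [hθ, hFp]
    split_ifs with hxF
    · rw [le_div_iff₀ hr, one_mul]
      linarith [dist_nonneg (x := x) (y := xstar)]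
    · refine (infDist_div_infDist_nonneg_le hr hx (fun h => hxF ⟨hx, h⟩) hxbar hxbar_r).trans ?_
      gcongr
      simpa [dist_eq_norm, norm_sub_rev x xstar] using
        norm_sub_le_norm_sub_add_norm_sub xbar xstar x
  have hball : ∀ ε > 0,
      sSup (θ '' {x | x ∈ V ∧ infDist x {xstar} ≤ ε}) ≤ (‖xbar - xstar‖ + ε) / r :=
    fun ε hε => Real.sSup_le (by
      rintro _ ⟨x, ⟨hx, hxε⟩, rfl⟩
      rw [infDist_singleton] at hxε
      exact (hpoint x hx).trans (by gcongr)) (by positivity)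
  have hlim : Tendsto (fun ε : ℝ => (‖xbar - xstar‖ + ε) / r) (𝓝[>] 0)
      (𝓝 (‖xbar - xstar‖ / r)) := by
    simpa using ((continuous_const.add continuous_id).div_const r).continuousAt.tendsto.mono_left
      (nhdsWithin_le_nhds (a := (0 : ℝ)))
  exact le_of_tendsto_of_tendsto hθp hlim (eventually_nhdsWithin_of_forall hball)

theorem inner_add_inner_nonneg_of_feasible {V : AffineSubspace ℝ (EuclideanSpace ℝ (Fin n))}
    {c q x s : EuclideanSpace ℝ (Fin n)} (hc : c ∈ V.direction) (hq : q ∈ V)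
    (hqperp : ∀ d ∈ V.direction, ⟪q, d⟫ = 0) (hx : x ∈ V) (hx0 : ∀ i, 0 ≤ x i)
    (hs : s - c ∈ V.directionᗮ) (hs0 : ∀ i, 0 ≤ s i) : 0 ≤ ⟪c, x⟫ + ⟪q, s⟫ := by
  have := inner_eq_mul_inner_add_inner hq hqperp hc (μ := 1) (by rwa [one_smul]) hx
  linarith [inner_nonneg_of_forall_nonneg hs0 hx0]

theorem inner_add_mul_nonneg_of_homogenize {W : Submodule ℝ (EuclideanSpace ℝ (Fin n))}
    {a c s₀ s : EuclideanSpace ℝ (Fin n)} {b μ : ℝ}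
    (hP : ∀ s, s - c ∈ W → (∀ i, 0 ≤ s i) → 0 ≤ ⟪a, s⟫ + b)
    (hs₀ : s₀ - c ∈ W) (hs₀0 : ∀ i, 0 ≤ s₀ i)
    (hs0 : ∀ i, 0 ≤ s i) (hμ : 0 ≤ μ) (hsμ : s - μ • c ∈ W) : 0 ≤ ⟪a, s⟫ + μ * b := by
  rcases hμ.eq_or_lt with rfl | hμ
  · rw [zero_smul, sub_zero] at hsμ
    have hray : ∀ t : ℝ, 0 ≤ t → 0 + t * 0 ≤ (⟪a, s₀⟫ + b) + t * ⟪a, s⟫ := fun t ht => by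
      have := hP (s₀ + t • s)
        (by simpa [add_sub_right_comm] using W.add_mem hs₀ (W.smul_mem t hsμ))
        fun i => by simpa using add_nonneg (hs₀0 i) (mul_nonneg ht (hs0 i))
      rw [inner_add_right, real_inner_smul_right] at this
      linarith
    simpa using le_of_forall_add_mul_le_add_mul hray
  · have := hP (μ⁻¹ • s) (by simpa [smul_sub, hμ.ne'] using W.smul_mem μ⁻¹ hsμ)
      fun i => by simpa using mul_nonneg (inv_nonneg.2 hμ.le) (hs0 i)
    rw [real_inner_smul_right] at this
    have := mul_nonneg hμ.le this
    rwa [mul_add, ← mul_assoc, mul_inv_cancel₀ hμ.ne', one_mul] at this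

theorem exists_apply_le_of_isGreatest [Nonempty (Fin n)]
    {V : AffineSubspace ℝ (EuclideanSpace ℝ (Fin n))} {c : EuclideanSpace ℝ (Fin n)} {β r : ℝ}
    (hr : 0 < r)
    (hmax : IsGreatest {t | ∃ x ∈ {x | x ∈ V ∧ ∀ i, 0 ≤ x i}, ⟪c, x⟫ ≤ β ∧ t = ⨅ i, x i} r)
    {x : EuclideanSpace ℝ (Fin n)} (hx : x ∈ V) (hxβ : ⟪c, x⟫ ≤ β) : ∃ i, x i ≤ r := by
  by_contra! hlt
  obtain ⟨i, hi⟩ := exists_eq_ciInf_of_finite (f := fun i => x i)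
  have := hmax.2 ⟨x, ⟨hx, fun i => hr.le.trans (hlt i).le⟩, hxβ, rfl⟩
  linarith [hlt i]

theorem exists_dual_certificate {V : AffineSubspace ℝ (EuclideanSpace ℝ (Fin n))}
    {c x₀ : EuclideanSpace ℝ (Fin n)} {β r : ℝ} (hc : c ∈ V.direction) (hc0 : c ≠ 0)
    (hx₀ : x₀ ∈ V) (hx₀β : ⟪c, x₀⟫ ≤ β) (hprimal : ∀ x ∈ V, ⟪c, x⟫ ≤ β → ∃ i, x i ≤ r) :
    ∃ (s : EuclideanSpace ℝ (Fin n)) (μ : ℝ), (∀ i, 0 ≤ s i) ∧ 0 ≤ μ ∧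
      s - μ • c ∈ V.directionᗮ ∧ ∀ x ∈ V, ⟪c, x⟫ ≤ β → ∀ t > r, ⟪s, x⟫ < t * ∑ i, s i := by
  have hUL :
      Disjoint {y : EuclideanSpace ℝ (Fin n) | ∀ i, r < y i} {x | x ∈ V ∧ ⟪c, x⟫ ≤ β} :=
    disjoint_left.2 fun x hxU hxL => by
      obtain ⟨i, hi⟩ := hprimal x hxL.1 hxL.2
      exact (hxU i).not_ge hi
  have hUc : Convex ℝ {y : EuclideanSpace ℝ (Fin n) | ∀ i, r < y i} := by
    simpa only [Set.ofPred_forall] using convex_iInter fun i =>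
      convex_halfSpace_gt (f := fun y : EuclideanSpace ℝ (Fin n) => y i)
        ⟨fun _ _ => rfl, fun _ _ => rfl⟩ r
  have hLc : Convex ℝ {x | x ∈ V ∧ ⟪c, x⟫ ≤ β} :=
    V.convex.inter
      (convex_halfSpace_le ⟨inner_add_right c, fun t x => real_inner_smul_right c x t⟩ β)
  obtain ⟨s, v, hL, hU⟩ := exists_inner_separation (isOpen_setOf_forall_lt_apply r) hUc hLc hUL
  have hconst : ∀ t > r, v < t * ∑ i, s i := fun t ht => by
    simpa [inner_toLp_const] using hU (WithLp.toLp 2 fun _ => t) fun _ => ht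
  have hs : ∀ i, 0 ≤ s i := fun i =>
    le_of_forall_add_mul_le_add_mul (a := v) (b := 0) (a' := (r + 1) * ∑ i, s i) fun t ht => by
      have := hU (WithLp.toLp 2 (fun _ => r + 1) + t • EuclideanSpace.single i 1) fun j => by
        by_cases hj : j = i
        · simp [hj]; linarith
        · simp [hj]
      rw [inner_add_right, inner_toLp_const, real_inner_smul_right,
        EuclideanSpace.inner_single_right] at this
      simp only [one_mul, conj_trivial] at this
      linarith
  obtain ⟨μ, hμ, hsμ⟩ := exists_nonneg_smul_sub_mem_orthogonal hc hc0 (s := s)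
    (B := v - ⟪s, x₀⟫) fun d hd hcd => by
      have := hL (d + x₀) ⟨AffineSubspace.vadd_mem_of_mem_direction hd hx₀, by
        rw [inner_add_right]; linarith⟩
      rw [inner_add_right] at this
      linarith
  exact ⟨s, μ, hs, hμ, hsμ, fun x hx hxβ t ht => (hL x ⟨hx, hxβ⟩).trans_lt (hconst t ht)⟩

/-- Applied to a certificate `(s, μ)` of `exists_dual_certificate`, with `A = Σ sᵢ`,
`g = qᵀs + μ f*` and `R = √n`. -/
theorem mul_le_of_dual_certificate {δ ν D r R μ g A : ℝ} (hδ : 0 < δ) (hν : 0 < ν) (hD : 0 ≤ D)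
    (hr : 0 ≤ r) (hR : 0 ≤ R) (hμ : 0 ≤ μ) (hg : 0 ≤ g) (hA : ν * A ≤ R * (g + μ * ν * D))
    (hprimal : ∀ t > r, μ * δ + g < t * A) : δ * ν ≤ r * R * (δ + ν * D) := by
  have hle : μ * δ + g ≤ r * A := le_mul_of_forall_lt_mul hprimal
  rcases (by positivity : 0 ≤ μ * δ + g).eq_or_lt with h0 | hpos
  · have hμ0 : μ = 0 := by nlinarith
    have hg0 : g = 0 := by nlinarith
    have := hprimal (r + 1) (by linarith)
    subst hμ0 hg0
    nlinarith
  by_contra! h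
  have h₁ : ν * (μ * δ + g) ≤ r * R * (g + μ * ν * D) := by nlinarith
  nlinarith [mul_pos (sub_pos.2 h) hpos, mul_nonneg hδ.le (sub_nonneg.2 h₁),
    mul_nonneg (mul_nonneg (mul_nonneg hr hR) hμ) (sq_nonneg δ),
    mul_nonneg (mul_nonneg (mul_nonneg hr hR) (mul_nonneg hν.le hD)) hg]

theorem mul_sum_apply_le_of_mul_infDist_le {S : Set (EuclideanSpace ℝ (Fin n))}
    (hS : S.Nonempty) (hSb : Bornology.IsBounded S) {s : EuclideanSpace ℝ (Fin n)} {ν g : ℝ}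
    (hν : 0 ≤ ν) (h : ν * infDist s S ≤ g) :
    ν * ∑ i, s i ≤ √n * (g + ν * (infDist 0 S + diam S)) :=
  calc ν * ∑ i, s i ≤ ν * (√n * ‖s‖) :=
        mul_le_mul_of_nonneg_left (sum_apply_le_sqrt_mul_norm s) hν
    _ ≤ ν * (√n * (infDist s S + (infDist 0 S + diam S))) := by
        gcongr
        exact norm_le_infDist_add_infDist_zero_add_diam hS hSb s
    _ = √n * (ν * infDist s S + ν * (infDist 0 S + diam S)) := by ring
    _ ≤ √n * (g + ν * (infDist 0 S + diam S)) := by gcongr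

theorem delta_mul_le_of_dual_bound {V : AffineSubspace ℝ (EuclideanSpace ℝ (Fin n))}
    {c q xstar s₀ : EuclideanSpace ℝ (Fin n)} {f δ ν D r : ℝ}
    (hc : c ∈ V.direction) (hc0 : c ≠ 0) (hq : q ∈ V) (hqperp : ∀ d ∈ V.direction, ⟪q, d⟫ = 0)
    (hxs : xstar ∈ V) (hxsc : ⟪c, xstar⟫ = f) (hδ : 0 < δ) (hν : 0 < ν) (hD : 0 ≤ D) (hr : 0 < r)
    (hprimal : ∀ x ∈ V, ⟪c, x⟫ ≤ f + δ → ∃ i, x i ≤ r)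
    (hs₀ : s₀ - c ∈ V.directionᗮ) (hs₀0 : ∀ i, 0 ≤ s₀ i)
    (hgap : ∀ s, s - c ∈ V.directionᗮ → (∀ i, 0 ≤ s i) → 0 ≤ ⟪q, s⟫ + f)
    (hdual : ∀ s, s - c ∈ V.directionᗮ → (∀ i, 0 ≤ s i) →
      ν * ∑ i, s i ≤ √n * (⟪q, s⟫ + f + ν * D)) :
    δ * ν ≤ r * √n * (δ + ν * D) := by
  obtain ⟨s, μ, hs0, hμ, hsμ, hsep⟩ := exists_dual_certificate hc hc0 hxs (by linarith) hprimal
  have hg := inner_add_mul_nonneg_of_homogenize hgap hs₀ hs₀0 hs0 hμ hsμ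
  have hA : ν * ∑ i, s i ≤ √n * (⟪q, s⟫ + μ * f + μ * ν * D) := by
    have := inner_add_mul_nonneg_of_homogenize (a := √n • q - WithLp.toLp 2 (fun _ => ν))
      (b := √n * (f + ν * D)) (fun s hs hs0 => by
        rw [inner_sub_left, real_inner_smul_left, real_inner_comm s (WithLp.toLp 2 fun _ => ν),
          inner_toLp_const]
        linarith [hdual s hs hs0]) hs₀ hs₀0 hs0 hμ hsμ
    rw [inner_sub_left, real_inner_smul_left, real_inner_comm s (WithLp.toLp 2 fun _ => ν),
      inner_toLp_const] at this
    linarith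
  set x₁ := xstar + (δ / ‖c‖ ^ 2) • c
  have hx₁ : x₁ ∈ V := by
    simpa [x₁, vadd_eq_add, add_comm] using
      AffineSubspace.vadd_mem_of_mem_direction (V.direction.smul_mem (δ / ‖c‖ ^ 2) hc) hxs
  have hx₁c : ⟪c, x₁⟫ = f + δ := by
    rw [inner_add_right, real_inner_smul_right, real_inner_self_eq_norm_sq, hxsc,
      div_mul_cancel₀ δ (by positivity)]
  have hsx₁ := inner_eq_mul_inner_add_inner hq hqperp hc hsμ hx₁
  refine mul_le_of_dual_certificate hδ hν hD hr.le (Real.sqrt_nonneg _) hμ hg hA fun t ht => ?_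
  have := hsep x₁ hx₁ hx₁c.le t ht
  rw [hsx₁, hx₁c] at this
  linarith

theorem limiting_error_ratio_intermediate_bound_general
    (n : ℕ) (hn : 0 < n)
    (Vp : AffineSubspace ℝ (EuclideanSpace ℝ (Fin n)))
    (c : EuclideanSpace ℝ (Fin n)) (hcdir : c ∈ Vp.direction) (hc0 : c ≠ 0)
    (Fp : Set (EuclideanSpace ℝ (Fin n)))
    (hFp : Fp = {x | x ∈ Vp ∧ ∀ i, 0 ≤ x i})
    (fstar : ℝ)
    (hfstar : IsLeast ((fun x => ⟪c, x⟫) '' Fp) fstar)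
    (Xstar : Set (EuclideanSpace ℝ (Fin n)))
    (hXstar : Xstar = {x ∈ Fp | ⟪c, x⟫ = fstar})
    (xstar : EuclideanSpace ℝ (Fin n)) (hunique : Xstar = {xstar})
    (Vd : Set (EuclideanSpace ℝ (Fin n)))
    (hVd : Vd = {s | s - c ∈ Vp.directionᗮ})
    (Fd : Set (EuclideanSpace ℝ (Fin n)))
    (hFd : Fd = {s | s ∈ Vd ∧ ∀ i, 0 ≤ s i})
    (q : EuclideanSpace ℝ (Fin n)) (hqVp : q ∈ Vp)
    (hqmin : ∀ v ∈ (Vp : Set (EuclideanSpace ℝ (Fin n))), ‖q‖ ≤ ‖v‖) (hq0 : q ≠ 0)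
    (Sstar : Set (EuclideanSpace ℝ (Fin n)))
    (hSstar : Sstar = {s ∈ Fd | ∀ t ∈ Fd, -⟪q, t⟫ ≤ -⟪q, s⟫})
    (hSne : Sstar.Nonempty) (hSbdd : Bornology.IsBounded Sstar)
    (θ : EuclideanSpace ℝ (Fin n) → ℝ)
    (hθ : ∀ x, θ x = if x ∈ Fp then 1
        else infDist x Fp / infDist x {y : EuclideanSpace ℝ (Fin n) | ∀ i, 0 ≤ y i})
    (θp : ℝ)
    (hθp : Tendsto (fun ε : ℝ => sSup (θ '' {x | x ∈ Vp ∧ infDist x Xstar ≤ ε}))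
        (𝓝[>] (0 : ℝ)) (𝓝 θp))
    (μd : ℝ)
    (hμd : μd = sInf ((fun s => (⟪q, s⟫ + fstar) / (‖q‖ * infDist s Sstar)) '' (Fd \ Sstar)))
    (hμd_pos : 0 < μd)
    (δ : ℝ) (hδ : 0 < δ)
    (xbar : EuclideanSpace ℝ (Fin n)) (hxbarF : xbar ∈ Fp)
    (hxbar_rδ : IsGreatest {t | ∃ x ∈ Fp, ⟪c, x⟫ ≤ fstar + δ ∧ t = ⨅ i, x i} (⨅ i, xbar i))
    (hrδ_pos : 0 < ⨅ i, xbar i) :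
    θp ≤ ‖xstar - xbar‖ * (Real.sqrt n / δ) *
      (δ / (infDist 0 (Vp : Set (EuclideanSpace ℝ (Fin n))) * μd)
        + infDist 0 Sstar + Metric.diam Sstar) := by
  have : Nonempty (Fin n) := Fin.pos_iff_nonempty.mp hn
  subst hunique hFp hVd hFd
  obtain ⟨⟨hxsV, hxs0⟩, hxsc⟩ : (xstar ∈ Vp ∧ ∀ i, 0 ≤ xstar i) ∧ ⟪c, xstar⟫ = fstar :=
    hXstar.subset rfl
  have hqperp : ∀ d ∈ Vp.direction, ⟪q, d⟫ = 0 :=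
    fun _ => inner_eq_zero_of_forall_norm_le hqVp hqmin
  set r := ⨅ i, xbar i
  have hxbar_r : ∀ i, r ≤ xbar i := ciInf_le (Finite.bddBelow_range _)
  obtain ⟨j, hj⟩ := exists_apply_eq_zero_of_forall_inner_le hcdir hc0 hxsV hxs0
    fun x hx hx0 => hxsc ▸ hfstar.2 ⟨x, ⟨hx, hx0⟩, rfl⟩
  have hgap : ∀ s, s - c ∈ Vp.directionᗮ → (∀ i, 0 ≤ s i) → 0 ≤ ⟪q, s⟫ + fstar :=
    fun s hs hs0 => by
      linarith [inner_add_inner_nonneg_of_feasible hcdir hqVp hqperp hxsV hxs0 hs hs0]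
  have hν : 0 < ‖q‖ * μd := mul_pos (norm_pos_iff.2 hq0) hμd_pos
  have hdual : ∀ s, s - c ∈ Vp.directionᗮ → (∀ i, 0 ≤ s i) →
      ‖q‖ * μd * ∑ i, s i ≤ √n * (⟪q, s⟫ + fstar + ‖q‖ * μd * (infDist 0 Sstar + diam Sstar)) :=
    fun s hs hs0 => mul_sum_apply_le_of_mul_infDist_le hSne hSbdd hν.le
      (mul_infDist_le_of_eq_sInf (fun s hs => hgap s hs.1 hs.2) (norm_nonneg q) hμd ⟨hs, hs0⟩)
  obtain ⟨s₀, ⟨hs₀, hs₀0⟩, -⟩ := hSstar ▸ hSne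
  have hδ_le := delta_mul_le_of_dual_bound hcdir hc0 hqVp hqperp hxsV hxsc hδ hν
    (add_nonneg infDist_nonneg diam_nonneg) hrδ_pos
    (fun x hx hxβ => exists_apply_le_of_isGreatest hrδ_pos hxbar_rδ hx hxβ) hs₀ hs₀0 hgap hdual
  rw [infDist_zero_eq_norm_of_forall_norm_le hqVp hqmin, norm_sub_rev, add_assoc]
  exact le_mul_mul_of_le_div (norm_nonneg _) hrδ_pos hδ hν
    (limiting_error_ratio_le rfl hrδ_pos hxbarF.1 hxbar_r hj hθ hθp) hδ_le

/-- inequality \eqref{bound thetax}: if the primal LP has a unique optimal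
solution `x*`, `μ_p > 0`, `μ_d > 0`, `S*` is nonempty and bounded, `δ > 0`, and `x̄ ∈ F_p`
satisfies `c^T x̄ ≤ f* + δ` and `min_i x̄_i = r_δ > 0`, then
`θ_p* ≤ ‖x* − x̄‖ · (√n/δ) · (δ/(Dist(0,V_p)·μ_d) + Dist(0,S*) + Diam(S*))`. -/
theorem limiting_error_ratio_intermediate_bound
    (n : ℕ) (hn : 0 < n)
    (Vp : AffineSubspace ℝ (EuclideanSpace ℝ (Fin n)))
    (c : EuclideanSpace ℝ (Fin n)) (hcdir : c ∈ Vp.direction) (hc0 : c ≠ 0)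
    (Fp : Set (EuclideanSpace ℝ (Fin n)))
    (hFp : Fp = {x | x ∈ Vp ∧ ∀ i, 0 ≤ x i})
    (fstar : ℝ)
    (hfstar : IsLeast ((fun x => ⟪c, x⟫) '' Fp) fstar)
    (Xstar : Set (EuclideanSpace ℝ (Fin n)))
    (hXstar : Xstar = {x ∈ Fp | ⟪c, x⟫ = fstar})
    (xstar : EuclideanSpace ℝ (Fin n)) (hunique : Xstar = {xstar})
    (Vd : Set (EuclideanSpace ℝ (Fin n)))
    (hVd : Vd = {s | s - c ∈ Vp.directionᗮ})
    (Fd : Set (EuclideanSpace ℝ (Fin n)))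
    (hFd : Fd = {s | s ∈ Vd ∧ ∀ i, 0 ≤ s i})
    (q : EuclideanSpace ℝ (Fin n)) (hqVp : q ∈ Vp)
    (hqmin : ∀ v ∈ (Vp : Set (EuclideanSpace ℝ (Fin n))), ‖q‖ ≤ ‖v‖) (hq0 : q ≠ 0)
    (Sstar : Set (EuclideanSpace ℝ (Fin n)))
    (hSstar : Sstar = {s ∈ Fd | ∀ t ∈ Fd, -⟪q, t⟫ ≤ -⟪q, s⟫})
    (hSne : Sstar.Nonempty) (hSbdd : Bornology.IsBounded Sstar)
    (hPnonopt : (Fp \ Xstar).Nonempty)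
    (hDnonopt : (Fd \ Sstar).Nonempty)
    (θ : EuclideanSpace ℝ (Fin n) → ℝ)
    (hθ : ∀ x, θ x = if x ∈ Fp then 1
        else infDist x Fp / infDist x {y : EuclideanSpace ℝ (Fin n) | ∀ i, 0 ≤ y i})
    (θp : ℝ)
    (hθp : Tendsto (fun ε : ℝ => sSup (θ '' {x | x ∈ Vp ∧ infDist x Xstar ≤ ε}))
        (𝓝[>] (0 : ℝ)) (𝓝 θp))
    (μp : ℝ)
    (hμp : μp = sInf ((fun x => (⟪c, x⟫ - fstar) / (‖c‖ * infDist x Xstar)) '' (Fp \ Xstar)))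
    (hμp_pos : 0 < μp)
    (μd : ℝ)
    (hμd : μd = sInf ((fun s => (⟪q, s⟫ + fstar) / (‖q‖ * infDist s Sstar)) '' (Fd \ Sstar)))
    (hμd_pos : 0 < μd)
    (δ : ℝ) (hδ : 0 < δ)
    (xbar : EuclideanSpace ℝ (Fin n)) (hxbarF : xbar ∈ Fp)
    (hxbarobj : ⟪c, xbar⟫ ≤ fstar + δ)
    (hxbar_rδ : IsGreatest {t | ∃ x ∈ Fp, ⟪c, x⟫ ≤ fstar + δ ∧ t = ⨅ i, x i} (⨅ i, xbar i))
    (hrδ_pos : 0 < ⨅ i, xbar i) :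
    θp ≤ ‖xstar - xbar‖ * (Real.sqrt n / δ) *
      (δ / (infDist 0 (Vp : Set (EuclideanSpace ℝ (Fin n))) * μd)
        + infDist 0 Sstar + Metric.diam Sstar) :=
  limiting_error_ratio_intermediate_bound_general n hn Vp c hcdir hc0 Fp hFp fstar hfstar Xstar
    hXstar xstar hunique Vd hVd Fd hFd q hqVp hqmin hq0 Sstar hSstar hSne hSbdd θ hθ θp hθp μd hμd
    hμd_pos δ hδ xbar hxbarF hxbar_rδ hrδ_pos
end LinearProgram
end
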